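/- Under the stated setup, assume in addition that A = ⊕_{w ∈ ℤ} A_w is a ℤ-graded k-algebra with A_w = 0 for w > 0, and that there is a positive integer w_1 with ρ(ξ)(A_w) ⊆ A_{w + w_1} for all ξ ∈ 𝔲 and all w ∈ ℤ. Let 𝔲' ⊆ 𝔲 be a subspace with quotient map q : 𝔲 → 𝔰 := 𝔲/𝔲', set r := dim 𝔲 and k := dim 𝔰, and fix a basis ξ_1,…,ξ_r of 𝔲 with ξ_1,…,ξ_{r−k} a basis of 𝔲'. Suppose that the composition of q* ⊗ id : 𝔰* ⊗_k A → 𝔲* ⊗_k A with the projection 𝔲* ⊗_k A → coker(φ) is an isomorphism. Then there exist elements f_1,…,f_{r−k} ∈ A_{−w_1} such that ρ(ξ_i)(f_j) = δ_{ij} for all 1 ≤ i,j ≤ r−k. -/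

import Mathlib

/-!
Surjectivity onto `coker φ` writes the `j`-th coordinate functional of `𝔲` as `g ∘ q` plus an
element `∑ₜ aₜ · (ξ ↦ ρ(ξ)(cₜ))` of `im φ`; on `𝔲'` the term `g ∘ q` vanishes, so
`∑ₜ aₜ ρ(ξᵢ)(cₜ) = δᵢⱼ`. Now take degree-zero parts. As `A` lives in degrees `≤ 0`, this is
multiplicative, and as `ρ(ξ)` raises degrees by `w₁ > 0` it kills `A₀`; hence the degree-zero part
of `aₜ ρ(ξ)(cₜ)` is `ρ(ξ)((aₜ)₀ (cₜ)₋w₁)`, and `f_j = ∑ₜ (aₜ)₀ (cₜ)₋w₁` works.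
-/

noncomputable section

variable {k A 𝔲 : Type*}
variable [Field k] [CommRing A] [Algebra k A]
variable [AddCommGroup 𝔲] [Module k 𝔲]

/-- The derivation `A → 𝔲* ⊗ₖ A` (with `𝔲* ⊗ₖ A` represented by `𝔲 →ₗ[k] A`)
sending `b` to `ξ ↦ ρ(ξ)(b)`. -/
def coactDer (ρ : 𝔲 →ₗ[k] Derivation k A A) : Derivation k A (𝔲 →ₗ[k] A) where
  toLinearMap :=
    { toFun := fun b =>
        { toFun := fun ξ => ρ ξ b
          map_add' := fun ξ η => by simp
          map_smul' := fun c ξ => by simp }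
      map_add' := fun b c => by ext ξ; simp
      map_smul' := fun c b => by ext ξ; simp }
  map_one_eq_zero' := by ext ξ; simp
  leibniz' := fun a b => by
    ext ξ
    simp [Derivation.leibniz, smul_eq_mul, mul_comm]

/-- The infinitesimal action `φ : Ω_{A/k} → 𝔲* ⊗ₖ A`, determined by
`φ(a db) = (ξ ↦ a · ρ(ξ)(b))`. -/
def phiDer (ρ : 𝔲 →ₗ[k] Derivation k A A) :
    KaehlerDifferential k A →ₗ[A] (𝔲 →ₗ[k] A) :=
  (coactDer ρ).liftKaehlerDifferential

/-- Precomposition with the quotient map, `(𝔲/𝔲')* ⊗ₖ A → 𝔲* ⊗ₖ A`. -/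
def precompQ (𝔲' : Submodule k 𝔲) : ((𝔲 ⧸ 𝔲') →ₗ[k] A) →ₗ[A] (𝔲 →ₗ[k] A) where
  toFun f := f.comp 𝔲'.mkQ
  map_add' f g := by ext v; simp
  map_smul' a f := by ext v; simp

/-- The invariants `A^𝔲 = {a ∈ A : ρ(ξ)(a) = 0 for all ξ ∈ 𝔲}`, as a
`k`-subalgebra of `A`. -/
def invariants (ρ : 𝔲 →ₗ[k] Derivation k A A) : Subalgebra k A where
  carrier := {a | ∀ ξ : 𝔲, ρ ξ a = 0}
  mul_mem' := fun {a b} ha hb ξ => by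
    rw [Derivation.leibniz]
    simp [ha ξ, hb ξ]
  one_mem' := fun ξ => by simp
  add_mem' := fun {a b} ha hb ξ => by simp [ha ξ, hb ξ]
  zero_mem' := fun ξ => by simp
  algebraMap_mem' := fun c ξ => by simp

open DirectSum

theorem coe_decompose_map_add_of_mapsTo {ι σ F A : Type*} [DecidableEq ι]
    [AddRightCancelMonoid ι] [AddCommMonoid A] [SetLike σ A] [AddSubmonoidClass σ A]
    (𝒜 : ι → σ) [Decomposition 𝒜] [FunLike F A A] [AddMonoidHomClass F A A] (D : F) {d : ι}
    (hD : ∀ w, ∀ a ∈ 𝒜 w, D a ∈ 𝒜 (w + d)) (w : ι) (c : A) :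
    (decompose 𝒜 (D c) (w + d) : A) = D (decompose 𝒜 c w) := by
  induction c using Decomposition.inductionOn 𝒜 with
  | zero => simp
  | add c c' hc hc' =>
    simp only [map_add, decompose_add, DirectSum.add_apply, AddMemClass.coe_add, hc, hc']
  | homogeneous c =>
    rename_i v
    by_cases hv : v = w
    · subst hv
      rw [decompose_of_mem_same 𝒜 (hD v c c.2), decompose_coe, of_eq_same]
    · rw [decompose_of_mem_ne 𝒜 (hD v c c.2) (by simpa using hv),
        decompose_of_mem_ne 𝒜 c.2 hv, map_zero]

section Grading

variable (𝒜 : ℤ → Submodule k A) (ρ : 𝔲 →ₗ[k] Derivation k A A) {w₁ : ℤ}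

theorem eq_zero_of_mem_of_pos (hneg : ∀ w : ℤ, 0 < w → 𝒜 w = ⊥) {w : ℤ} (hw : 0 < w) {a : A}
    (ha : a ∈ 𝒜 w) : a = 0 := by
  rwa [hneg w hw, Submodule.mem_bot] at ha

theorem coe_decompose_mul_zero_of_nonpos [GradedAlgebra 𝒜] (hneg : ∀ w : ℤ, 0 < w → 𝒜 w = ⊥)
    (x y : A) :
    (decompose 𝒜 (x * y) 0 : A) = decompose 𝒜 x 0 * decompose 𝒜 y 0 := by
  induction x using Decomposition.inductionOn 𝒜 with
  | zero => simp
  | add x x' hx hx' =>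
    simp only [add_mul, decompose_add, DirectSum.add_apply, Submodule.coe_add, hx, hx']
  | homogeneous x =>
    rename_i i
    by_cases hi : i = 0
    · subst hi
      rw [coe_decompose_mul_of_left_mem_zero 𝒜 x.2, decompose_coe, of_eq_same]
    rw [decompose_of_mem_ne 𝒜 x.2 hi, zero_mul]
    induction y using Decomposition.inductionOn 𝒜 with
    | zero => simp
    | add y y' hy hy' =>
      simp only [mul_add, decompose_add, DirectSum.add_apply, Submodule.coe_add, hy, hy', add_zero]
    | homogeneous y =>
      rename_i j
      by_cases hij : i + j = 0
      · rcases lt_or_gt_of_ne hi with hi | hi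
        · rw [eq_zero_of_mem_of_pos 𝒜 hneg (by omega) y.2, mul_zero]; simp
        · rw [eq_zero_of_mem_of_pos 𝒜 hneg hi x.2, zero_mul]; simp
      · exact decompose_of_mem_ne 𝒜 (SetLike.mul_mem_graded x.2 y.2) hij

theorem coe_decompose_mul_derivation_zero [GradedAlgebra 𝒜] (hneg : ∀ w : ℤ, 0 < w → 𝒜 w = ⊥)
    (hw₁ : 0 < w₁) (hder : ∀ (ξ : 𝔲) (w : ℤ) (a : A), a ∈ 𝒜 w → ρ ξ a ∈ 𝒜 (w + w₁))
    (ξ : 𝔲) (a c : A) :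
    (decompose 𝒜 (a * ρ ξ c) 0 : A) = ρ ξ (decompose 𝒜 a 0 * decompose 𝒜 c (-w₁)) := by
  have hρc : (decompose 𝒜 (ρ ξ c) 0 : A) = ρ ξ (decompose 𝒜 c (-w₁)) := by
    rw [← coe_decompose_map_add_of_mapsTo 𝒜 (ρ ξ) (hder ξ), neg_add_cancel]
  have hρa : ρ ξ (decompose 𝒜 a 0 : A) = 0 :=
    eq_zero_of_mem_of_pos 𝒜 hneg (by omega) (hder ξ 0 _ (decompose 𝒜 a 0).2)
  rw [coe_decompose_mul_zero_of_nonpos 𝒜 hneg, hρc, Derivation.leibniz, hρa, smul_zero, add_zero,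
    smul_eq_mul]

theorem range_phiDer_eq_span :
    LinearMap.range (phiDer ρ) = Submodule.span A (Set.range (coactDer ρ)) := by
  rw [LinearMap.range_eq_map, ← KaehlerDifferential.span_range_derivation, Submodule.map_span,
    ← Set.range_comp]
  congr 2
  funext c
  exact (coactDer ρ).liftKaehlerDifferential_comp_D c

theorem exists_mem_decompose_zero_eq_of_mem_range_phiDer [GradedAlgebra 𝒜]
    (hneg : ∀ w : ℤ, 0 < w → 𝒜 w = ⊥) (hw₁ : 0 < w₁)
    (hder : ∀ (ξ : 𝔲) (w : ℤ) (a : A), a ∈ 𝒜 w → ρ ξ a ∈ 𝒜 (w + w₁))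
    {F : 𝔲 →ₗ[k] A} (hF : F ∈ LinearMap.range (phiDer ρ)) :
    ∃ f ∈ 𝒜 (-w₁), ∀ ξ, (decompose 𝒜 (F ξ) 0 : A) = ρ ξ f := by
  rw [range_phiDer_eq_span, Finsupp.mem_span_range_iff_exists_finsupp] at hF
  obtain ⟨l, rfl⟩ := hF
  refine ⟨l.sum fun c a => decompose 𝒜 a 0 * decompose 𝒜 c (-w₁), ?_, fun ξ => ?_⟩
  · exact Submodule.finsuppSum_mem _ _ _ _ fun c _ => by
      simpa using SetLike.mul_mem_graded (decompose 𝒜 (l c) 0).2 (decompose 𝒜 c (-w₁)).2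
  · simp only [Finsupp.sum, LinearMap.sum_apply, LinearMap.smul_apply, smul_eq_mul,
      decompose_sum, DirectSum.sum_apply, Submodule.coe_sum, map_sum]
    exact Finset.sum_congr rfl fun c _ =>
      coe_decompose_mul_derivation_zero 𝒜 ρ hneg hw₁ hder ξ (l c) c

theorem exists_mem_forall_derivation_eq_algebraMap [GradedAlgebra 𝒜]
    (hneg : ∀ w : ℤ, 0 < w → 𝒜 w = ⊥) (hw₁ : 0 < w₁)
    (hder : ∀ (ξ : 𝔲) (w : ℤ) (a : A), a ∈ 𝒜 w → ρ ξ a ∈ 𝒜 (w + w₁)) (𝔲' : Submodule k 𝔲)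
    (hsurj : Function.Surjective ⇑((LinearMap.range (phiDer ρ)).mkQ ∘ₗ precompQ (A := A) 𝔲'))
    (ℓ : 𝔲 →ₗ[k] k) : ∃ f ∈ 𝒜 (-w₁), ∀ ξ ∈ 𝔲', ρ ξ f = algebraMap k A (ℓ ξ) := by
  let ε : 𝔲 →ₗ[k] A := Algebra.linearMap k A ∘ₗ ℓ
  obtain ⟨g, hg⟩ := hsurj (Submodule.mkQ _ ε)
  have hmem : ε - precompQ 𝔲' g ∈ LinearMap.range (phiDer ρ) :=
    (Submodule.Quotient.eq _).mp hg.symm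
  obtain ⟨f, hf, hfξ⟩ :=
    exists_mem_decompose_zero_eq_of_mem_range_phiDer 𝒜 ρ hneg hw₁ hder hmem
  refine ⟨f, hf, fun ξ hξ => ?_⟩
  have hgξ : precompQ 𝔲' g ξ = 0 := by
    simp [precompQ, (Submodule.Quotient.mk_eq_zero 𝔲').mpr hξ]
  rw [← hfξ, LinearMap.sub_apply, hgξ, sub_zero]
  exact decompose_of_mem_same 𝒜 (SetLike.algebraMap_mem_graded 𝒜 _)

end Grading

theorem statement8 (ρ : 𝔲 →ₗ[k] Derivation k A A)
    (𝒜 : ℤ → Submodule k A) [GradedAlgebra 𝒜]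
    (hneg : ∀ w : ℤ, 0 < w → 𝒜 w = ⊥)
    (w₁ : ℤ) (hw₁ : 0 < w₁)
    (hder : ∀ (ξ : 𝔲) (w : ℤ) (a : A), a ∈ 𝒜 w → ρ ξ a ∈ 𝒜 (w + w₁))
    (𝔲' : Submodule k 𝔲)
    (r m : ℕ) (hm : m ≤ r) (b : Module.Basis (Fin r) k 𝔲)
    (hb : 𝔲' = Submodule.span k (Set.range fun i : Fin m => b (Fin.castLE hm i)))
    (hiso : Function.Bijective
      ⇑((LinearMap.range (phiDer ρ)).mkQ ∘ₗ precompQ (A := A) 𝔲')) :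
    ∃ f : Fin m → A, (∀ j, f j ∈ 𝒜 (-w₁)) ∧
      ∀ i j : Fin m, ρ (b (Fin.castLE hm i)) (f j) = if i = j then 1 else 0 := by
  have hξ : ∀ i : Fin m, b (Fin.castLE hm i) ∈ 𝔲' := fun i => hb ▸ Submodule.subset_span ⟨i, rfl⟩
  choose f hf hρf using fun j : Fin m =>
    exists_mem_forall_derivation_eq_algebraMap 𝒜 ρ hneg hw₁ hder 𝔲' hiso.2
      (b.coord (Fin.castLE hm j))
  refine ⟨f, hf, fun i j => ?_⟩
  rw [hρf j _ (hξ i), b.coord_apply, b.repr_self, Finsupp.single_apply]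
  simp only [(Fin.castLE_injective hm).eq_iff]
  split_ifs <;> simp
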